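/- Let {f₁,…,fₙ} be a canonical system and 𝓕 = span_ℂ{f₁,…,fₙ}. Then 𝓕 = ⊕_{k≥1} { f ∈ R_k : g*f = 0 for every g ∈ R_ℓ with 0 < ℓ < k }, where R_k = R ∩ S_k is the space of homogeneous invariants of degree k. -/

import Mathlib

open MvPolynomial

noncomputable section

/-- The polynomial ring `S = ℂ[x₁, …, xₙ]`. -/
abbrev S (n : ℕ) := MvPolynomial (Fin n) ℂ

variable {n : ℕ}

/-- The contravariant action of a unitary matrix `w` on polynomials:
`(w · f)(v) = f (w⁻¹ · v)`, i.e. the substitution `xᵢ ↦ ∑ⱼ (w⁻¹)ᵢⱼ xⱼ`. -/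
def polyAct (w : Matrix.unitaryGroup (Fin n) ℂ) : S n →ₐ[ℂ] S n :=
  aeval fun i => ∑ j, ((↑(w⁻¹) : Matrix (Fin n) (Fin n) ℂ) i j) • (X j : S n)

/-- Invariance of a polynomial under a subgroup `W` of the unitary group. -/
def IsInv (W : Subgroup (Matrix.unitaryGroup (Fin n) ℂ)) (f : S n) : Prop :=
  ∀ w ∈ W, polyAct w f = f

/-- The pointwise fixed space of a matrix. -/
def fixedSpace (w : Matrix (Fin n) (Fin n) ℂ) : Submodule ℂ (Fin n → ℂ) :=
  LinearMap.ker (Matrix.toLin' (w - 1))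

/-- A reflection: a non-identity unitary transformation fixing a hyperplane pointwise. -/
def IsReflection (w : Matrix.unitaryGroup (Fin n) ℂ) : Prop :=
  w ≠ 1 ∧ Module.finrank ℂ (fixedSpace (w : Matrix (Fin n) (Fin n) ℂ)) = n - 1

/-- `W` is generated by the reflections it contains. -/
def IsReflGroup (W : Subgroup (Matrix.unitaryGroup (Fin n) ℂ)) : Prop :=
  Subgroup.closure {w | w ∈ W ∧ IsReflection w} = W

/-- The differential operator `∂^a = ∂₁^{a₁} ⋯ ∂ₙ^{aₙ}` (the partial derivatives commute,
so the chosen order of composition is irrelevant). -/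
def mOp (a : Fin n →₀ ℕ) : S n →ₗ[ℂ] S n :=
  (List.finRange n).foldr
    (fun i acc => ((pderiv i : Derivation ℂ (S n) (S n)).toLinearMap ^ (a i)) ∘ₗ acc)
    LinearMap.id

/-- The differential operator `f* = ∑ conj(c_a) ∂^a` (for `f = ∑ c_a x^a`) applied to `g`. -/
def starOp (f g : S n) : S n :=
  ∑ a ∈ f.support, (starRingEnd ℂ) (MvPolynomial.coeff a f) • mOp a g
/-- The subalgebra `R = S^W` of `W`-invariant polynomials. -/
def invAlg (W : Subgroup (Matrix.unitaryGroup (Fin n) ℂ)) : Subalgebra ℂ (S n) where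
  carrier := {f | IsInv W f}
  mul_mem' := fun hf hg w hw => by rw [map_mul, hf w hw, hg w hw]
  add_mem' := fun hf hg w hw => by rw [map_add, hf w hw, hg w hw]
  algebraMap_mem' := fun c w _ => (polyAct w).commutes c

/-- A system of basic invariants: `n` algebraically independent homogeneous
invariant polynomials generating `R = S^W` as a `ℂ`-algebra. -/
def IsBasicInv (W : Subgroup (Matrix.unitaryGroup (Fin n) ℂ)) (f : Fin n → S n) : Prop :=
  (∀ i, ∃ k, (f i).IsHomogeneous k) ∧ (∀ i, IsInv W (f i)) ∧
    AlgebraicIndependent ℂ f ∧ Algebra.adjoin ℂ (Set.range f) = invAlg W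

/-- A canonical system of basic invariants: `fᵢ* fⱼ = δᵢⱼ`. -/
def IsCanonical (W : Subgroup (Matrix.unitaryGroup (Fin n) ℂ)) (f : Fin n → S n) : Prop :=
  IsBasicInv W f ∧ ∀ i j, starOp (f i) (f j) = if i = j then 1 else 0

/-- The ideal `I = S·R₊` of `S` generated by the homogeneous invariants of positive degree. -/
def idealI (W : Subgroup (Matrix.unitaryGroup (Fin n) ℂ)) : Ideal (S n) :=
  Ideal.span {f : S n | IsInv W f ∧ ∃ k, 0 < k ∧ f.IsHomogeneous k}

/-- `W` acts irreducibly on `V = ℂⁿ`. -/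
def IsIrred (W : Subgroup (Matrix.unitaryGroup (Fin n) ℂ)) : Prop :=
  ∀ U : Submodule ℂ (Fin n → ℂ),
    (∀ w ∈ W, ∀ v ∈ U, Matrix.mulVec ((w : Matrix.unitaryGroup (Fin n) ℂ) : Matrix (Fin n) (Fin n) ℂ) v ∈ U) →
      U = ⊥ ∨ U = ⊤

/-- `H` is a reflecting hyperplane of `W`. -/
def ReflHyperplane (W : Subgroup (Matrix.unitaryGroup (Fin n) ℂ))
    (H : Submodule ℂ (Fin n → ℂ)) : Prop :=
  ∃ w ∈ W, IsReflection w ∧ fixedSpace ((w : Matrix.unitaryGroup (Fin n) ℂ) : Matrix (Fin n) (Fin n) ℂ) = H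

/-- The linear polynomial in `S` corresponding to a linear form `ℓ ∈ V*`. -/
def linPoly (ℓ : Module.Dual ℂ (Fin n → ℂ)) : S n :=
  ∑ i, MvPolynomial.C (ℓ (Pi.single i 1)) * X i

/-- `e_H`: the order of the (cyclic) subgroup of `W` fixing `H` pointwise. -/
def eOrd (W : Subgroup (Matrix.unitaryGroup (Fin n) ℂ)) (H : Submodule ℂ (Fin n → ℂ)) : ℕ :=
  Nat.card {w : W | ∀ v ∈ H,
    Matrix.mulVec ((↑w : Matrix.unitaryGroup (Fin n) ℂ) : Matrix (Fin n) (Fin n) ℂ) v = v}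

/-- `Δ = ∏_H L_H^{e_H - 1}`, the product over all reflecting hyperplanes. -/
def DeltaPoly (W : Subgroup (Matrix.unitaryGroup (Fin n) ℂ))
    (Hyp : Finset (Submodule ℂ (Fin n → ℂ)))
    (L : Submodule ℂ (Fin n → ℂ) → Module.Dual ℂ (Fin n → ℂ)) : S n :=
  ∏ H ∈ Hyp, linPoly (L H) ^ (eOrd W H - 1)

/-- `𝓗 = {h* Δ : h ∈ S}`. -/
def HH (Δ : S n) : Set (S n) := {g | ∃ h : S n, starOp h Δ = g}

/-- The Hermitian inner product `⟨f, g⟩ = (f* g)|_{x = 0}`. -/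
def innerP (f g : S n) : ℂ := constantCoeff (starOp f g)

/-- The differential `dh = ∑ⱼ (∂ⱼ h) ⊗ xⱼ`, recorded by its coordinates
with respect to the basis `x₁, …, xₙ` of `V*`. -/
def dForm (h : S n) : Fin n → S n := fun j => pderiv j h

/-- The action of `w` on `1`-forms `∑ⱼ gⱼ ⊗ xⱼ ∈ S ⊗ V*` in coordinates:
`w · (g ⊗ L) = (w·g) ⊗ (w·L)`. -/
def formAct (w : Matrix.unitaryGroup (Fin n) ℂ) (g : Fin n → S n) : Fin n → S n :=
  fun k => ∑ j, ((↑(w⁻¹) : Matrix (Fin n) (Fin n) ℂ) j k) • polyAct w (g j)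

/-- The `W`-invariant elements of `𝓗 ⊗ V*`, in coordinates. -/
def invHForms (W : Subgroup (Matrix.unitaryGroup (Fin n) ℂ)) (Δ : S n) :
    Set (Fin n → S n) :=
  {g | (∀ j, g j ∈ HH Δ) ∧ ∀ w ∈ W, formAct w g = g}

/-- The map `ε : S ⊗ V* → S`, `ε(∑ⱼ hⱼ ⊗ xⱼ) = ∑ⱼ xⱼ hⱼ`. -/
def epsMap (g : Fin n → S n) : S n := ∑ j, X j * g j

/-- The map `φ : S → 𝓗`, `φ(f) = (f* Δ)* Δ`. -/
def phiMap (Δ f : S n) : S n := starOp (starOp f Δ) Δ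

lemma starOp_zero_right (f : S n) : starOp f 0 = 0 := by
  unfold starOp; simp

lemma starOp_add_right (f p q : S n) : starOp f (p + q) = starOp f p + starOp f q := by
  unfold starOp
  rw [← Finset.sum_add_distrib]
  exact Finset.sum_congr rfl fun a _ => by rw [map_add, smul_add]

lemma starOp_smul_right (f : S n) (c : ℂ) (p : S n) : starOp f (c • p) = c • starOp f p := by
  unfold starOp
  rw [Finset.smul_sum]
  exact Finset.sum_congr rfl fun a _ => by rw [map_smul, smul_comm]

/-- For `k ≥ 1`, the space `{f ∈ R_k : g* f = 0 for every g ∈ R_ℓ with 0 < ℓ < k}`. -/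
def Gk (W : Subgroup (Matrix.unitaryGroup (Fin n) ℂ)) (k : ℕ) : Submodule ℂ (S n) where
  carrier := {p | p.IsHomogeneous k ∧ IsInv W p ∧
    ∀ (g : S n) (l : ℕ), 0 < l → l < k → IsInv W g → g.IsHomogeneous l → starOp g p = 0}
  zero_mem' :=
    ⟨isHomogeneous_zero _ _ _, fun w _ => map_zero _, fun g _ _ _ _ _ => starOp_zero_right g⟩
  add_mem' := fun {p q} hp hq =>
    ⟨hp.1.add hq.1, fun w hw => by rw [map_add, hp.2.1 w hw, hq.2.1 w hw],
      fun g l h1 h2 h3 h4 => by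
        rw [starOp_add_right, hp.2.2 g l h1 h2 h3 h4, hq.2.2 g l h1 h2 h3 h4, add_zero]⟩
  smul_mem' := fun c p hp => by
    refine ⟨?_, fun w hw => ?_, fun g l h1 h2 h3 h4 => ?_⟩
    · simpa [mem_homogeneousSubmodule] using
        (homogeneousSubmodule (Fin n) ℂ k).smul_mem c ((mem_homogeneousSubmodule _ _).mpr hp.1)
    · rw [map_smul, hp.2.1 w hw]
    · rw [starOp_smul_right, hp.2.2 g l h1 h2 h3 h4, smul_zero]

/-!
Since `(p q)* = p* ∘ q*`, the operator `f*` lowers degrees by `deg f`, and `⟨q, q⟩ = (q* q)(0)`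
is positive definite, the theorem reduces to bookkeeping with monomials `f^m` in the basic
invariants: every homogeneous invariant of degree `d` is a combination of those `f^m` of weighted
degree `d`.

`fᵢ` lies in `G_{deg fᵢ}`: a monomial `f^m` of smaller positive degree has a factor `fⱼ` with
`j ≠ i`, and `fⱼ* fᵢ = 0`. Conversely, if `|m| ≥ 2` then `f^m = f^{m'} fⱼ` with `m' ≠ 0`, and
`(f^m)*` kills every `p ∈ G_e`: `fⱼ* p` vanishes when `deg fⱼ < e` and is a constant, killed by
`(f^{m'})*`, otherwise. Split `p ∈ G_d` into its part linear in the `fᵢ` and the rest `q`, a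
combination of `f^m` with `|m| ≥ 2`. As `q = p - (linear part)` is a sum of elements of the
`G_e`, every such `(f^m)*` kills `q`; so `q* q = 0`, hence `q = 0`.
-/

lemma pderiv_pow_monomial (i : Fin n) (e : ℕ) (b : Fin n →₀ ℕ) (c : ℂ) :
    ((pderiv i : Derivation ℂ (S n) (S n)).toLinearMap ^ e) (monomial b c) =
      monomial (b - Finsupp.single i e) (c * (b i).descFactorial e) := by
  induction e generalizing b c with
  | zero => simp
  | succ e ih =>
    rw [pow_succ', Module.End.mul_apply, ih, Derivation.coeFn_coe, pderiv_monomial,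
      tsub_tsub, ← Finsupp.single_add, Finsupp.tsub_apply, Finsupp.single_eq_same,
      Nat.descFactorial_succ, mul_assoc, Nat.cast_mul, mul_comm ((b i - e : ℕ) : ℂ)]

lemma foldr_pderiv_pow_monomial (a b : Fin n →₀ ℕ) (c : ℂ) {l : List (Fin n)} (hl : l.Nodup) :
    l.foldr (fun i acc => ((pderiv i : Derivation ℂ (S n) (S n)).toLinearMap ^ a i) ∘ₗ acc)
        LinearMap.id (monomial b c) =
      monomial (b - ∑ i ∈ l.toFinset, Finsupp.single i (a i))
        (c * ∏ i ∈ l.toFinset, ((b i).descFactorial (a i) : ℂ)) := by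
  induction l with
  | nil => simp
  | cons i l ih =>
    obtain ⟨hi, hl⟩ := List.nodup_cons.mp hl
    have hi' : i ∉ l.toFinset := List.mem_toFinset.not.mpr hi
    have hbi : (b - ∑ j ∈ l.toFinset, Finsupp.single j (a j)) i = b i := by
      rw [Finsupp.tsub_apply, Finsupp.finsetSum_apply,
        Finset.sum_eq_zero fun j hj => Finsupp.single_eq_of_ne (ne_of_mem_of_not_mem hj hi').symm,
        Nat.sub_zero]
    rw [List.foldr_cons, LinearMap.comp_apply, ih hl, pderiv_pow_monomial, hbi, tsub_tsub,
      List.toFinset_cons, Finset.sum_insert hi', Finset.prod_insert hi', add_comm, mul_assoc,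
      mul_comm (∏ j ∈ l.toFinset, _)]

lemma mOp_monomial (a b : Fin n →₀ ℕ) (c : ℂ) :
    mOp a (monomial b c) = monomial (b - a) (c * ∏ i, ((b i).descFactorial (a i) : ℂ)) := by
  rw [mOp, foldr_pderiv_pow_monomial a b c (List.nodup_finRange n), List.toFinset_finRange,
    Finsupp.univ_sum_single]

lemma mOp_monomial_of_not_le {a b : Fin n →₀ ℕ} (h : ¬ a ≤ b) (c : ℂ) :
    mOp a (monomial b c) = 0 := by
  obtain ⟨i, hi⟩ : ∃ i, b i < a i := by simpa [Finsupp.le_def] using h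
  rw [mOp_monomial, Finset.prod_eq_zero (Finset.mem_univ i)
    (by rw [Nat.descFactorial_eq_zero_iff_lt.mpr hi, Nat.cast_zero]), mul_zero, monomial_zero]

lemma mOp_add (a b : Fin n →₀ ℕ) : mOp (a + b) = mOp a ∘ₗ mOp b := by
  refine linearMap_ext fun s => LinearMap.ext fun c => ?_
  simp only [LinearMap.comp_apply, mOp_monomial, tsub_tsub, add_comm b a, mul_assoc,
    ← Finset.prod_mul_distrib]
  congr 3 with i
  rw [Finsupp.add_apply, Finsupp.tsub_apply, ← Nat.cast_mul, mul_comm,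
    ← Nat.descFactorial_mul_descFactorial (Nat.le_add_left (b i) (a i)), Nat.add_sub_cancel]
lemma starOp_eq_sum_of_support_subset {f : S n} (g : S n) {T : Finset (Fin n →₀ ℕ)}
    (hT : f.support ⊆ T) : starOp f g = ∑ a ∈ T, starRingEnd ℂ (coeff a f) • mOp a g :=
  Finset.sum_subset hT fun a _ ha => by rw [notMem_support_iff.mp ha, map_zero, zero_smul]

lemma starOp_add_left (p q g : S n) : starOp (p + q) g = starOp p g + starOp q g := by
  rw [starOp_eq_sum_of_support_subset g support_add,
    starOp_eq_sum_of_support_subset g Finset.subset_union_left,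
    starOp_eq_sum_of_support_subset g Finset.subset_union_right, ← Finset.sum_add_distrib]
  simp only [coeff_add, map_add, add_smul]

lemma starOp_monomial_left (a : Fin n →₀ ℕ) (c : ℂ) (g : S n) :
    starOp (monomial a c) g = starRingEnd ℂ c • mOp a g := by
  rw [starOp_eq_sum_of_support_subset g support_monomial_subset, Finset.sum_singleton,
    coeff_monomial, if_pos rfl]

lemma starOp_sum_left {ι : Type*} (s : Finset ι) (F : ι → S n) (g : S n) :
    starOp (∑ i ∈ s, F i) g = ∑ i ∈ s, starOp (F i) g :=
  map_sum (AddMonoidHom.mk' (starOp · g) fun p q => starOp_add_left p q g) F s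

def starOpₗ (f : S n) : S n →ₗ[ℂ] S n where
  toFun := starOp f
  map_add' := starOp_add_right f
  map_smul' := starOp_smul_right f

lemma starOp_mul_left (p q g : S n) : starOp (p * q) g = starOp p (starOp q g) := by
  induction p using MvPolynomial.induction_on' with
  | monomial a c =>
    induction q using MvPolynomial.induction_on' with
    | monomial b d =>
      rw [monomial_mul, starOp_monomial_left, starOp_monomial_left, starOp_monomial_left,
        map_mul, mOp_add, LinearMap.comp_apply, map_smul, smul_smul]
    | add q₁ q₂ ih₁ ih₂ =>
      rw [mul_add, starOp_add_left, ih₁, ih₂, starOp_add_left, ← starOp_add_right]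
  | add p₁ p₂ ih₁ ih₂ => rw [add_mul, starOp_add_left, ih₁, ih₂, starOp_add_left]

section Homogeneity

variable {p g : S n} {k l : ℕ}

lemma degree_eq_of_mem_support (hp : p.IsHomogeneous k) {a : Fin n →₀ ℕ} (ha : a ∈ p.support) :
    a.degree = k := by
  rw [Finsupp.degree_eq_weight_one]
  exact hp (mem_support_iff.mp ha)

lemma isHomogeneous_mOp (hp : p.IsHomogeneous k) (a : Fin n →₀ ℕ) :
    (mOp a p).IsHomogeneous (k - a.degree) := by
  rw [p.as_sum, map_sum]
  refine IsHomogeneous.sum _ _ _ fun b hb => ?_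
  by_cases hab : a ≤ b
  · refine mOp_monomial a b _ ▸ isHomogeneous_monomial _ ?_
    rw [← degree_eq_of_mem_support hp hb, ← tsub_add_cancel_of_le hab, map_add,
      Nat.add_sub_cancel, tsub_add_cancel_of_le hab]
  · exact mOp_monomial_of_not_le hab _ ▸ isHomogeneous_zero _ _ _

lemma mOp_eq_zero_of_lt_degree (hp : p.IsHomogeneous k) {a : Fin n →₀ ℕ} (h : k < a.degree) :
    mOp a p = 0 := by
  rw [p.as_sum, map_sum]
  refine Finset.sum_eq_zero fun b hb => mOp_monomial_of_not_le (fun hab => ?_) _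
  have := Finsupp.degree_mono hab
  rw [degree_eq_of_mem_support hp hb] at this
  omega

lemma isHomogeneous_starOp (hg : g.IsHomogeneous l) (hp : p.IsHomogeneous k) :
    (starOp g p).IsHomogeneous (k - l) :=
  IsHomogeneous.sum _ _ _ fun a ha => by
    rw [smul_eq_C_mul, ← degree_eq_of_mem_support hg ha]
    exact (isHomogeneous_mOp hp a).C_mul _

lemma starOp_eq_zero_of_lt (hg : g.IsHomogeneous l) (hp : p.IsHomogeneous k) (h : k < l) :
    starOp g p = 0 :=
  Finset.sum_eq_zero fun a ha => by
    rw [mOp_eq_zero_of_lt_degree hp (degree_eq_of_mem_support hg ha ▸ h), smul_zero]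

end Homogeneity

lemma constantCoeff_mOp (a : Fin n →₀ ℕ) (g : S n) :
    constantCoeff (mOp a g) = coeff a g * ∏ i, ((a i).factorial : ℂ) := by
  have hmonomial : ∀ b c, constantCoeff (mOp a (monomial b c)) =
      if b = a then c * ∏ i, ((a i).factorial : ℂ) else 0 := by
    intro b c
    by_cases hab : a ≤ b
    · rw [mOp_monomial, constantCoeff_monomial]
      by_cases hba : b = a
      · subst hba
        simp [Nat.descFactorial_self]
      · rw [if_neg fun h => hba (le_antisymm (tsub_eq_zero_iff_le.mp h) hab), if_neg hba]
    · rw [mOp_monomial_of_not_le hab, map_zero, if_neg (fun h => hab h.ge)]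
  conv_lhs => rw [g.as_sum, map_sum, map_sum]
  simp only [hmonomial, Finset.sum_ite_eq', mem_support_iff, ite_not]
  split_ifs with h <;> simp [h]

lemma innerP_self (q : S n) :
    innerP q q =
      ((∑ a ∈ q.support, Complex.normSq (coeff a q) * ∏ i, ((a i).factorial : ℝ) : ℝ) : ℂ) := by
  simp only [innerP, starOp, map_sum, smul_eq_C_mul, map_mul, constantCoeff_C, constantCoeff_mOp]
  push_cast
  refine Finset.sum_congr rfl fun a _ => ?_
  rw [← Complex.mul_conj]
  ring

lemma eq_zero_of_innerP_self_eq_zero {q : S n} (h : innerP q q = 0) : q = 0 := by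
  rw [innerP_self, Complex.ofReal_eq_zero, Finset.sum_eq_zero_iff_of_nonneg
    fun a _ => mul_nonneg (Complex.normSq_nonneg _) (by positivity)] at h
  ext a
  by_contra ha
  have hpos : 0 < Complex.normSq (coeff a q) * ∏ i, ((a i).factorial : ℝ) :=
    mul_pos (Complex.normSq_pos.mpr ha) (by positivity)
  exact hpos.ne' (h a (mem_support_iff.mpr ha))

section WeightedSubstitution

variable {ι σ R : Type*} [CommSemiring R] {f : ι → MvPolynomial σ R} {k : ι → ℕ}

lemma isHomogeneous_aeval_monomial (hk : ∀ i, (f i).IsHomogeneous (k i)) (m : ι →₀ ℕ) (c : R) :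
    (aeval f (monomial m c)).IsHomogeneous (Finsupp.weight k m) := by
  rw [aeval_monomial, ← C_eq_algebraMap, Finsupp.weight_apply, Finsupp.sum]
  simp only [smul_eq_mul, mul_comm (m _)]
  exact (IsHomogeneous.prod _ _ _ fun i _ => (hk i).pow (m i)).C_mul c

lemma homogeneousComponent_aeval (hk : ∀ i, (f i).IsHomogeneous (k i))
    (P : MvPolynomial ι R) (d : ℕ) :
    homogeneousComponent d (aeval f P) = aeval f (weightedHomogeneousComponent k d P) := by
  induction P using MvPolynomial.induction_on' with
  | monomial m c =>
    rw [homogeneousComponent_of_mem (isHomogeneous_aeval_monomial hk m c),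
      weightedHomogeneousComponent_of_mem (isWeightedHomogeneous_monomial k m c rfl)]
    split_ifs <;> simp
  | add P Q hP hQ => rw [map_add, map_add, hP, hQ, map_add, map_add]

lemma aeval_monomial_eq_mul {m : ι →₀ ℕ} {j : ι} (hj : m j ≠ 0) (c : R) :
    aeval f (monomial m c) = aeval f (monomial (m - Finsupp.single j 1) c) * f j := by
  conv_lhs => rw [← Finsupp.sub_add_single_one_cancel hj, ← mul_one c, ← monomial_mul]
  rw [map_mul, ← X, aeval_X]

lemma exists_isWeightedHomogeneous_aeval_eq (hk : ∀ i, (f i).IsHomogeneous (k i))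
    {g : MvPolynomial σ R} (hg : g ∈ Algebra.adjoin R (Set.range f)) {d : ℕ}
    (hgd : g.IsHomogeneous d) :
    ∃ Q : MvPolynomial ι R, Q.IsWeightedHomogeneous k d ∧ aeval f Q = g := by
  rw [Algebra.adjoin_range_eq_range_aeval] at hg
  obtain ⟨P, rfl⟩ := hg
  exact ⟨weightedHomogeneousComponent k d P,
    weightedHomogeneousComponent_isWeightedHomogeneous _ _,
    (homogeneousComponent_aeval hk P d).symm.trans (homogeneousComponent_eq_self hgd)⟩

end WeightedSubstitution

lemma AlgebraicIndependent.pos_of_isHomogeneous {ι σ R : Type*} [CommRing R] [Nontrivial R]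
    {f : ι → MvPolynomial σ R} (hf : AlgebraicIndependent R f) {i : ι} {k : ℕ}
    (hk : (f i).IsHomogeneous k) : 0 < k := by
  refine Nat.pos_of_ne_zero fun hk0 => hf.transcendental i ?_
  rw [totalDegree_eq_zero_iff_eq_C.mp
    ((totalDegree_zero_iff_isHomogeneous σ (p := f i)).mpr (hk0 ▸ hk)), ← algebraMap_eq]
  exact isAlgebraic_algebraMap _

lemma Finsupp.degree_sub_single_one_add {ι : Type*} {m : ι →₀ ℕ} {j : ι} (hj : m j ≠ 0) :
    (m - Finsupp.single j 1).degree + 1 = m.degree := by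
  conv_rhs => rw [← Finsupp.sub_add_single_one_cancel hj, map_add, Finsupp.degree_single]

lemma Finsupp.exists_eq_single_of_degree_eq_one {ι : Type*} {m : ι →₀ ℕ} (hm : m.degree = 1) :
    ∃ j, m = Finsupp.single j 1 := by
  obtain ⟨j, hj⟩ := DFunLike.ne_iff.mp fun h : m = 0 => by simp [h] at hm
  have hsub := Finsupp.degree_sub_single_one_add hj
  rw [hm, Nat.add_eq_right, Finsupp.degree_eq_zero_iff] at hsub
  exact ⟨j, by rw [← Finsupp.sub_add_single_one_cancel hj, hsub, zero_add]⟩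

section BasicInvariants

variable {W : Subgroup (Matrix.unitaryGroup (Fin n) ℂ)} {f : Fin n → S n} {k : Fin n → ℕ}

lemma IsBasicInv.degree_pos (hf : IsBasicInv W f) (hk : ∀ i, (f i).IsHomogeneous (k i))
    (i : Fin n) : 0 < k i :=
  hf.2.2.1.pos_of_isHomogeneous (hk i)

lemma IsBasicInv.mem_adjoin (hf : IsBasicInv W f) {g : S n} (hg : IsInv W g) :
    g ∈ Algebra.adjoin ℂ (Set.range f) := by
  rw [hf.2.2.2]
  exact hg

lemma starOp_aeval_monomial_eq_zero_of_mem_Gk (hf : IsBasicInv W f)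
    (hk : ∀ i, (f i).IsHomogeneous (k i)) {m : Fin n →₀ ℕ} (hm : 2 ≤ m.degree) (c : ℂ)
    {p : S n} {e : ℕ} (hp : p ∈ Gk W e) : starOp (aeval f (monomial m c)) p = 0 := by
  obtain ⟨hp_hom, -, hp_orth⟩ := hp
  obtain ⟨j, hj⟩ := DFunLike.ne_iff.mp fun h : m = 0 => by simp [h] at hm
  obtain ⟨i, hi⟩ := DFunLike.ne_iff.mp fun h : m - Finsupp.single j 1 = 0 => by
    have := Finsupp.degree_sub_single_one_add hj
    rw [h, map_zero] at this
    omega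
  have hweight : 0 < Finsupp.weight k (m - Finsupp.single j 1) :=
    (hf.degree_pos hk i).trans_le (Finsupp.le_weight_of_ne_zero' k hi)
  rw [aeval_monomial_eq_mul hj, starOp_mul_left]
  rcases lt_or_ge (k j) e with hlt | hge
  · rw [hp_orth (f j) (k j) (hf.degree_pos hk j) hlt (hf.2.1 j) (hk j), starOp_zero_right]
  · exact starOp_eq_zero_of_lt (isHomogeneous_aeval_monomial hk _ c)
      (isHomogeneous_starOp (hk j) hp_hom) (by omega)

lemma IsCanonical.mem_Gk (hf : IsCanonical W f) (hk : ∀ i, (f i).IsHomogeneous (k i))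
    (i : Fin n) : f i ∈ Gk W (k i) := by
  refine ⟨hk i, hf.1.2.1 i, fun g l hl hli hg hgl => ?_⟩
  obtain ⟨Q, hQ, rfl⟩ :=
    exists_isWeightedHomogeneous_aeval_eq hk (hf.1.mem_adjoin hg) hgl
  rw [Q.as_sum, map_sum, starOp_sum_left]
  refine Finset.sum_eq_zero fun m hm => ?_
  have hweight : Finsupp.weight k m = l := hQ (mem_support_iff.mp hm)
  obtain ⟨j, hj⟩ := DFunLike.ne_iff.mp fun h : m = 0 => by simp [h] at hweight; omega
  have hji : j ≠ i := by
    rintro rfl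
    have := Finsupp.le_weight_of_ne_zero' k hj
    omega
  rw [aeval_monomial_eq_mul hj, starOp_mul_left, hf.2 j i, if_neg hji, starOp_zero_right]

lemma IsCanonical.span_le_iSup_Gk (hf : IsCanonical W f) :
    Submodule.span ℂ (Set.range f) ≤ ⨆ (d : ℕ) (_ : 0 < d), Gk W d := by
  choose k hk using hf.1.1
  rw [Submodule.span_le]
  rintro - ⟨i, rfl⟩
  exact Submodule.mem_iSup_of_mem (k i)
    (Submodule.mem_iSup_of_mem (hf.1.degree_pos hk i) (hf.mem_Gk hk i))

lemma IsCanonical.mem_span_of_mem_Gk (hf : IsCanonical W f) {d : ℕ} (hd : 0 < d) {p : S n}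
    (hp : p ∈ Gk W d) : p ∈ Submodule.span ℂ (Set.range f) := by
  choose k hk using hf.1.1
  obtain ⟨Q, hQ, rfl⟩ :=
    exists_isWeightedHomogeneous_aeval_eq hk (hf.1.mem_adjoin hp.2.1) hp.1
  set lin := ∑ m ∈ Q.support with m.degree = 1, aeval f (monomial m (coeff m Q))
  set rest := ∑ m ∈ Q.support with ¬m.degree = 1, aeval f (monomial m (coeff m Q))
  have hsplit : lin + rest = aeval f Q := by
    conv_rhs => rw [Q.as_sum, map_sum]
    exact Finset.sum_filter_add_sum_filter_not _ _ _
  have hlin : lin ∈ Submodule.span ℂ (Set.range f) := Submodule.sum_mem _ fun m hm => by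
    obtain ⟨j, rfl⟩ := Finsupp.exists_eq_single_of_degree_eq_one (Finset.mem_filter.mp hm).2
    rw [← C_mul_X_eq_monomial, map_mul, aeval_C, aeval_X, algebraMap_eq, ← smul_eq_C_mul]
    exact Submodule.smul_mem _ _ (Submodule.subset_span ⟨j, rfl⟩)
  have hrest_mem : rest ∈ ⨆ (e : ℕ) (_ : 0 < e), Gk W e := by
    rw [eq_sub_of_add_eq' hsplit]
    exact sub_mem (Submodule.mem_iSup_of_mem d (Submodule.mem_iSup_of_mem hd hp))
      (hf.span_le_iSup_Gk hlin)
  have hrest : rest = 0 := by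
    refine eq_zero_of_innerP_self_eq_zero ?_
    rw [innerP, starOp_sum_left, Finset.sum_eq_zero, map_zero]
    intro m hm
    obtain ⟨hmQ, hm1⟩ := Finset.mem_filter.mp hm
    have hm0 : m.degree ≠ 0 := fun h => by
      have hweight : Finsupp.weight k m = d := hQ (mem_support_iff.mp hmQ)
      rw [(Finsupp.degree_eq_zero_iff m).mp h, map_zero] at hweight
      omega
    have hker : ⨆ (e : ℕ) (_ : 0 < e), Gk W e ≤
        LinearMap.ker (starOpₗ (aeval f (monomial m (coeff m Q)))) :=
      iSup₂_le fun e _ _ hq =>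
        starOp_aeval_monomial_eq_zero_of_mem_Gk hf.1 hk (by omega) _ hq
    exact hker hrest_mem
  rw [← hsplit, hrest, add_zero]
  exact hlin

end BasicInvariants

theorem span_canonical_eq_iSup_Gk_general (n : ℕ) (W : Subgroup (Matrix.unitaryGroup (Fin n) ℂ))
    (f : Fin n → S n) (hf : IsCanonical W f) :
    Submodule.span ℂ (Set.range f) = ⨆ (k : ℕ) (_ : 0 < k), Gk W k :=
  le_antisymm hf.span_le_iSup_Gk
    (iSup₂_le fun _ hd _ hp => hf.mem_span_of_mem_Gk hd hp)

/-- For a canonical system `f₁, …, fₙ`, the span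
`𝓕 = span_ℂ{f₁, …, fₙ}` equals `⊕_{k ≥ 1} {f ∈ R_k : g* f = 0 for all g ∈ R_ℓ, 0 < ℓ < k}`. -/
theorem span_canonical_eq_iSup_Gk (n : ℕ) (W : Subgroup (Matrix.unitaryGroup (Fin n) ℂ))
    (hfin : Finite W) (hrefl : IsReflGroup W) (hirr : IsIrred W)
    (f : Fin n → S n) (hf : IsCanonical W f) :
    Submodule.span ℂ (Set.range f) = ⨆ (k : ℕ) (_ : 0 < k), Gk W k :=
  span_canonical_eq_iSup_Gk_general n W f hf
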